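/- Let K be an n×n real symmetric positive definite matrix and α > 0, and for C ⊆ {1,…,n} let Pr(C) = det((K/α)_{CC}) / det(I + K/α). Let P = K(K + αI)^{-1}. Then for every fixed subset A ⊆ {1,…,n}, the inclusion probability satisfies ∑_{C : A ⊆ C ⊆ {1,…,n}} Pr(C) = det(P_{AA}). -/

import Mathlib

open Matrix BigOperators Finset

/-- The principal submatrix `M_{AA}` of `M` with rows and columns indexed by `A`. -/
def principalSub {n : ℕ} (M : Matrix (Fin n) (Fin n) ℝ) (A : Finset (Fin n)) :
    Matrix {x // x ∈ A} {x // x ∈ A} ℝ :=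
  fun i j => M i j

/-!
Write `L = K/α`, `I_A` for the diagonal indicator of `A` and `N = 1 + L`. Multilinearity of the
determinant in the rows gives `∑_{C ⊇ A} det L_CC = det (L + I_{Aᶜ}) = det (N - I_A)`.
Factoring `N - I_A = (1 - I_A N⁻¹) N`, the left factor agrees with the identity in the rows
outside `A` and with `1 - N⁻¹ = L N⁻¹` in the rows of `A`, so its determinant is the principal
minor `det (L N⁻¹)_AA`; finally `K (K + αI)⁻¹ = L N⁻¹`.
-/

namespace Matrix

variable {ι R : Type*} [Fintype ι] [DecidableEq ι]

section CommRing

variable [CommRing R]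

theorem det_add_diagonal_eq_sum_prod_mul_det_submatrix (M : Matrix ι ι R) (d : ι → R) :
    (M + diagonal d).det =
      ∑ S : Finset ι, (∏ i ∈ Sᶜ, d i) * (M.submatrix ((↑) : S → ι) (↑)).det := by
  have hrows :
      (M + diagonal d : ι → ι → R) = M.row + fun i => d i • (1 : Matrix ι ι R).row i := by
    ext i j
    by_cases h : i = j <;> simp [h]
  change detRowAlternating (M + diagonal d) = _
  rw [hrows, AlternatingMap.map_add_univ]
  refine Finset.sum_congr rfl fun S _ => ?_
  have hpiece : S.piecewise M.row (fun i => d i • (1 : Matrix ι ι R).row i) =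
      fun i => (if i ∈ Sᶜ then d i else 1) •
        S.piecewise M.row (1 : Matrix ι ι R).row i := by
    ext i j
    by_cases h : i ∈ S <;> simp [Finset.piecewise, h]
  rw [hpiece, AlternatingMap.map_smul_univ, Finset.prod_ite_mem, univ_inter, smul_eq_mul]
  exact congrArg _ (det_piecewise_one_eq_submatrix_det M S)

theorem det_add_diagonal_indicator_compl_eq_sum_superset (M : Matrix ι ι R) (A : Finset ι) :
    (M + diagonal fun i => if i ∈ A then 0 else 1).det =
      ∑ C ∈ univ.filter (A ⊆ ·), (M.submatrix ((↑) : C → ι) (↑)).det := by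
  rw [det_add_diagonal_eq_sum_prod_mul_det_submatrix, Finset.sum_filter]
  refine Finset.sum_congr rfl fun C _ => ?_
  split_ifs with hAC
  · rw [Finset.prod_eq_one fun i hi => if_neg fun hiA => mem_compl.1 hi (hAC hiA), one_mul]
  · obtain ⟨a, haA, haC⟩ := Finset.not_subset.1 hAC
    rw [Finset.prod_eq_zero (mem_compl.2 haC) (if_pos haA : (if a ∈ A then (0 : R) else 1) = 0),
      zero_mul]

theorem det_sub_diagonal_indicator_eq_mul_det_submatrix (M : Matrix ι ι R) (hM : IsUnit M.det)
    (A : Finset ι) :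
    (M - diagonal fun i => if i ∈ A then 1 else 0).det =
      M.det * ((1 - M⁻¹).submatrix ((↑) : A → ι) (↑)).det := by
  have hfactor : M - diagonal (fun i => if i ∈ A then 1 else 0) =
      of (A.piecewise (1 - M⁻¹).row (1 : Matrix ι ι R).row) * M := by
    have hleft : of (A.piecewise (1 - M⁻¹).row (1 : Matrix ι ι R).row) =
        1 - diagonal (fun i => if i ∈ A then 1 else 0) * M⁻¹ := by
      ext i j
      by_cases h : i ∈ A <;> simp [Finset.piecewise, h]
    rw [hleft, Matrix.sub_mul, Matrix.mul_assoc, nonsing_inv_mul _ hM, Matrix.one_mul,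
      Matrix.mul_one]
  rw [hfactor, det_mul, det_piecewise_one_eq_submatrix_det, mul_comm]

theorem mul_inv_one_add_eq_one_sub_inv (L : Matrix ι ι R) (hL : IsUnit (1 + L).det) :
    L * (1 + L)⁻¹ = 1 - (1 + L)⁻¹ := by
  rw [eq_sub_iff_add_eq, ← add_one_mul, add_comm, mul_nonsing_inv _ hL]

end CommRing

theorem sum_det_submatrix_superset_div_det_one_add [Field R] (L : Matrix ι ι R)
    (hL : (1 + L).det ≠ 0) (A : Finset ι) :
    ∑ C ∈ univ.filter (A ⊆ ·), (L.submatrix ((↑) : C → ι) (↑)).det / (1 + L).det =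
      ((L * (1 + L)⁻¹).submatrix ((↑) : A → ι) (↑)).det := by
  have hsplit : L + (diagonal fun i => if i ∈ A then 0 else 1) =
      1 + L - diagonal fun i => if i ∈ A then 1 else 0 := by
    ext i j
    rcases eq_or_ne i j with rfl | hij
    · by_cases h : i ∈ A <;> simp [h, add_comm]
    · simp [hij]
  rw [← sum_div, ← det_add_diagonal_indicator_compl_eq_sum_superset, hsplit,
    det_sub_diagonal_indicator_eq_mul_det_submatrix _ hL.isUnit, mul_div_cancel_left₀ _ hL,
    mul_inv_one_add_eq_one_sub_inv L hL.isUnit]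

end Matrix

theorem dpp_inclusion_prob_eq_det_marginal_general (n : ℕ) (K : Matrix (Fin n) (Fin n) ℝ)
    (hPD : K.PosDef) (α : ℝ) (hα : 0 < α)
    (A : Finset (Fin n)) :
    ∑ C ∈ Finset.univ.filter (fun C : Finset (Fin n) => A ⊆ C),
        (principalSub (α⁻¹ • K) C).det / (1 + α⁻¹ • K).det =
      (principalSub (K * (K + α • (1 : Matrix (Fin n) (Fin n) ℝ))⁻¹) A).det := by
  have hL : (1 + α⁻¹ • K).det ≠ 0 :=
    (PosDef.posSemidef_add PosSemidef.one (hPD.smul (inv_pos.2 hα))).det_pos.ne'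
  have hmarginal : K * (K + α • (1 : Matrix (Fin n) (Fin n) ℝ))⁻¹ =
      α⁻¹ • K * (1 + α⁻¹ • K)⁻¹ := by
    have hscale : K + α • 1 = α • (1 + α⁻¹ • K) := by
      rw [smul_add, smul_smul, mul_inv_cancel₀ hα.ne', one_smul, add_comm]
    have : Invertible α := invertibleOfNonzero hα.ne'
    rw [hscale, inv_smul _ α hL.isUnit, invOf_eq_inv, Matrix.mul_smul, Matrix.smul_mul]
  rw [hmarginal]
  exact sum_det_submatrix_superset_div_det_one_add (α⁻¹ • K) hL A

/-- Inclusion probabilities of the DPP with L-ensemble `K/α`: if each subset `C` receives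
probability `det((K/α)_{CC}) / det(I + K/α)`, then for every fixed subset `A`,
`Pr(A ⊆ Y) = det(P_{AA})` where `P = K (K + αI)⁻¹` is the marginal kernel. -/
theorem dpp_inclusion_prob_eq_det_marginal (n : ℕ) (K : Matrix (Fin n) (Fin n) ℝ)
    (hsymm : K.IsSymm) (hPD : K.PosDef) (α : ℝ) (hα : 0 < α)
    (A : Finset (Fin n)) :
    ∑ C ∈ Finset.univ.filter (fun C : Finset (Fin n) => A ⊆ C),
        (principalSub (α⁻¹ • K) C).det / (1 + α⁻¹ • K).det =
      (principalSub (K * (K + α • (1 : Matrix (Fin n) (Fin n) ℝ))⁻¹) A).det :=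
  dpp_inclusion_prob_eq_det_marginal_general n K hPD α hα A
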